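/- arXiv:1011.3100 — 5 statements merged into one kernel-verified Lean document; each statement's English description precedes it below -/
import Mathlib

section
/- For any two integer-supported probability distribution functions F and G, there exists a universal constant C > 0 such that sup_{k∈ℤ} |ΔF(k) − ΔG(k)| ≤ C · (sup_{k∈ℤ} |F(k) − G(k)|)^{1/2} · (‖Δ³F‖₁ + ‖Δ³G‖₁)^{1/2}, where Δf(k) = f(k+1) − f(k) and ‖f‖₁ = Σ_{k∈ℤ} |f(k)|. -/
/-!
With `h = F - G`, `d = sup |h|` and `B = ‖Δ³F‖₁ + ‖Δ³G‖₁`, the claim is a discrete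
Landau–Kolmogorov inequality `|Δh| ≤ 4 √(d B)`. The bound `|Δ²h| ≤ B` holds because `Δ²F`
vanishes at `+∞`, so `Δ²F k = -∑_{j ≥ k} Δ³F j`. Discrete Taylor expansion gives
`n |Δh k| ≤ 2 d + n² B` for every `n : ℕ`, and `n = ⌈√(d / B)⌉` balances the two terms.
-/

open MeasureTheory Filter

noncomputable section

/-- Forward difference operator with step `m`. -/
def fd (m : ℤ) (f : ℤ → ℝ) : ℤ → ℝ := fun j => f (j + m) - f j

theorem fd_sub (m : ℤ) (f g : ℤ → ℝ) : fd m (f - g) = fd m f - fd m g := by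
  ext j; simp only [fd, Pi.sub_apply]; ring

theorem sum_Ico_fd (g : ℤ → ℝ) {a b : ℤ} (hab : a ≤ b) :
    ∑ j ∈ Finset.Ico a b, fd 1 g j = g b - g a := by
  induction b, hab using Int.leInduction with
  | base => simp
  | succ n hn ih =>
    rw [← Order.succ_eq_add_one, ← Finset.insert_Ico_right_eq_Ico_succ hn,
      Finset.sum_insert (by simp), ih, Order.succ_eq_add_one, fd]
    ring

theorem sum_range_fd (g : ℤ → ℝ) (k : ℤ) (n : ℕ) :
    ∑ i ∈ Finset.range n, fd 1 g (k + i) = g (k + n) - g k := by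
  simpa [fd, add_assoc] using Finset.sum_range_sub (fun i : ℕ => g (k + i)) n

theorem abs_sub_le_of_abs_fd_le {g : ℤ → ℝ} {B : ℝ} (hB : ∀ j, |fd 1 g j| ≤ B) (k : ℤ)
    (n : ℕ) : |g (k + n) - g k| ≤ n * B := by
  rw [← sum_range_fd]
  calc |∑ i ∈ Finset.range n, fd 1 g (k + i)|
      ≤ ∑ i ∈ Finset.range n, |fd 1 g (k + i)| := Finset.abs_sum_le_sum_abs _ _
    _ ≤ n * B := by
      simpa using Finset.sum_le_card_nsmul (Finset.range n) _ _ fun i _ => hB (k + i)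

theorem nat_mul_abs_fd_le {h : ℤ → ℝ} {d B : ℝ} (hd : ∀ j, |h j| ≤ d)
    (hB : ∀ j, |fd 1 (fd 1 h) j| ≤ B) (k : ℤ) (n : ℕ) :
    n * |fd 1 h k| ≤ 2 * d + n ^ 2 * B := by
  set err := h (k + n) - h k - n * fd 1 h k
  have taylor : err = ∑ i ∈ Finset.range n, (fd 1 h (k + i) - fd 1 h k) := by
    rw [Finset.sum_sub_distrib, sum_range_fd]; simp [err]
  have herr : |err| ≤ n * (n * B) := by
    rw [taylor]
    refine (Finset.abs_sum_le_sum_abs _ _).trans ?_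
    refine (Finset.sum_le_card_nsmul _ _ (n * B) fun i hi => ?_).trans (by simp)
    refine (abs_sub_le_of_abs_fd_le hB k i).trans ?_
    gcongr
    · exact (abs_nonneg _).trans (hB 0)
    · exact (Finset.mem_range.1 hi).le
  calc (n : ℝ) * |fd 1 h k| = |h (k + n) - h k - err| := by
        rw [sub_sub_cancel, abs_mul, Nat.abs_cast]
    _ ≤ |h (k + n)| + |h k| + |err| := (abs_sub _ _).trans (by gcongr; exact abs_sub _ _)
    _ ≤ 2 * d + n ^ 2 * B := by linarith [hd (k + n), hd k]

theorem le_four_mul_sqrt_mul_sqrt_of_forall_nat {x d B : ℝ} (hB : 0 ≤ B) (hx : x ≤ 2 * d)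
    (hn : ∀ n : ℕ, n * x ≤ 2 * d + n ^ 2 * B) : x ≤ 4 * √d * √B := by
  have hd : 0 ≤ d := by simpa using hn 0
  rcases le_or_gt d B with hdB | hBd
  · calc x ≤ 2 * (√d * √d) := by rwa [Real.mul_self_sqrt hd]
      _ ≤ 2 * (√d * √B) := by gcongr
      _ ≤ 4 * √d * √B := by nlinarith [Real.sqrt_nonneg d, Real.sqrt_nonneg B]
  rcases hB.eq_or_lt with rfl | hB
  · simp only [Real.sqrt_zero, mul_zero]
    by_contra! hx0
    obtain ⟨n, hn'⟩ := exists_nat_gt (2 * d / x)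
    linarith [(div_lt_iff₀ hx0).1 hn', hn n]
  set n := ⌈√d / √B⌉₊
  have hsB : 0 < √B := Real.sqrt_pos.2 hB
  have hlow : √d ≤ n * √B := (div_le_iff₀ hsB).1 (Nat.le_ceil _)
  have hhigh : n * √B ≤ 2 * √d := by
    have := Nat.ceil_lt_add_one (div_nonneg (Real.sqrt_nonneg d) hsB.le)
    have := (one_le_div hsB).2 (Real.sqrt_le_sqrt hBd.le)
    calc (n : ℝ) * √B ≤ 2 * (√d / √B) * √B := by gcongr; linarith
      _ = 2 * √d := by field_simp
  have hn0 : (0 : ℝ) < n :=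
    pos_of_mul_pos_left ((Real.sqrt_pos.2 (hB.trans hBd)).trans_le hlow) hsB.le
  refine le_of_mul_le_mul_left ((hn n).trans ?_) hn0
  calc 2 * d + n ^ 2 * B = 2 * √d * √d + n * (n * √B) * √B := by
        linear_combination (-2) * Real.mul_self_sqrt hd - (n : ℝ) ^ 2 * Real.mul_self_sqrt hB.le
    _ ≤ 2 * √d * (n * √B) + n * (2 * √d) * √B := by gcongr
    _ = n * (4 * √d * √B) := by ring

theorem abs_fd_le_four_mul_sqrt_mul_sqrt {h : ℤ → ℝ} {d B : ℝ} (hd : ∀ j, |h j| ≤ d)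
    (hB : ∀ j, |fd 1 (fd 1 h) j| ≤ B) (k : ℤ) : |fd 1 h k| ≤ 4 * √d * √B :=
  le_four_mul_sqrt_mul_sqrt_of_forall_nat ((abs_nonneg _).trans (hB 0))
    ((abs_sub _ _).trans (by linarith [hd (k + 1), hd k])) (nat_mul_abs_fd_le hd hB k)

theorem tendsto_fd_atTop {f : ℤ → ℝ} {L : ℝ} (hf : Tendsto f atTop (nhds L)) (m : ℤ) :
    Tendsto (fd m f) atTop (nhds 0) := by
  have := (hf.comp (tendsto_atTop_add_const_right _ m tendsto_id)).sub hf
  rwa [sub_self] at this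

theorem Summable.abs_fd {g : ℤ → ℝ} (hg : Summable fun j => |g j|) (m : ℤ) :
    Summable fun j => |fd m g j| :=
  .of_nonneg_of_le (fun _ => abs_nonneg _) (fun _ => abs_sub _ _)
    ((hg.comp_injective (add_left_injective m)).add hg)

theorem Monotone.summable_fd {f : ℤ → ℝ} (hf : Monotone f) {a b : ℝ} (ha : ∀ k, a ≤ f k)
    (hb : ∀ k, f k ≤ b) : Summable (fd 1 f) := by
  refine summable_of_sum_le (c := b - a) (fun k => sub_nonneg.2 (hf (by omega))) fun u => ?_
  set N : ℤ := u.sup Int.natAbs + 1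
  have hu : u ⊆ Finset.Ico (-N) N := fun j hj => by
    have := Finset.le_sup (f := Int.natAbs) hj
    rw [Finset.mem_Ico]; omega
  calc ∑ k ∈ u, fd 1 f k ≤ ∑ k ∈ Finset.Ico (-N) N, fd 1 f k :=
        Finset.sum_le_sum_of_subset_of_nonneg hu fun k _ _ => sub_nonneg.2 (hf (by omega))
    _ = f N - f (-N) := sum_Ico_fd f (by omega)
    _ ≤ b - a := sub_le_sub (hb N) (ha (-N))

theorem abs_le_tsum_abs_fd {g : ℤ → ℝ} (hg : Tendsto g atTop (nhds 0))
    (hs : Summable fun j => |fd 1 g j|) (k : ℤ) : |g k| ≤ ∑' j, |fd 1 g j| := by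
  have hM : ∀ M, k ≤ M → |g k| ≤ |g M| + ∑' j, |fd 1 g j| := fun M hkM => by
    calc |g k| = |g M - ∑ j ∈ Finset.Ico k M, fd 1 g j| := by
          rw [sum_Ico_fd g hkM, sub_sub_cancel]
      _ ≤ |g M| + ∑ j ∈ Finset.Ico k M, |fd 1 g j| :=
        (abs_sub _ _).trans (add_le_add_right (Finset.abs_sum_le_sum_abs _ _) _)
      _ ≤ |g M| + ∑' j, |fd 1 g j| := by
        gcongr; exact hs.sum_le_tsum _ fun j _ => abs_nonneg _
  refine ge_of_tendsto ?_ (eventually_atTop.2 ⟨k, hM⟩)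
  simpa using hg.abs.add_const (∑' j, |fd 1 g j|)

theorem Monotone.abs_fd_fd_le_tsum {F : ℤ → ℝ} (hF : Monotone F) {a b : ℝ}
    (ha : Tendsto F atBot (nhds a)) (hb : Tendsto F atTop (nhds b)) (k : ℤ) :
    |fd 1 (fd 1 F) k| ≤ ∑' j, |(fd 1)^[3] F j| := by
  have hΔ : Summable fun j => |fd 1 F j| :=
    (hF.summable_fd (hF.le_of_tendsto ha) (hF.ge_of_tendsto hb)).abs
  exact abs_le_tsum_abs_fd (tendsto_fd_atTop (tendsto_fd_atTop hb 1) 1)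
    ((hΔ.abs_fd 1).abs_fd 1) k

/-- `d_loc ≤ C · d_K^{1/2} · (‖Δ³F‖₁ + ‖Δ³G‖₁)^{1/2}` for integer-supported CDFs. -/
theorem dloc_le_sqrt_dK_mul_smoothness :
    ∃ C : ℝ, 0 < C ∧ ∀ F G : ℤ → ℝ,
      Monotone F → Tendsto F atBot (nhds 0) → Tendsto F atTop (nhds 1) →
      Monotone G → Tendsto G atBot (nhds 0) → Tendsto G atTop (nhds 1) →
      (⨆ k : ℤ, |fd 1 F k - fd 1 G k|) ≤
        C * Real.sqrt (⨆ k : ℤ, |F k - G k|) *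
          Real.sqrt ((∑' k : ℤ, |(fd 1)^[3] F k|) + ∑' k : ℤ, |(fd 1)^[3] G k|) := by
  refine ⟨4, by norm_num, fun F G hF hF0 hF1 hG hG0 hG1 => ciSup_le fun k => ?_⟩
  have hdK : ∀ j, |(F - G) j| ≤ ⨆ k, |F k - G k| :=
    le_ciSup ⟨1, Set.forall_mem_range.2 fun j =>
      abs_sub_le_of_nonneg_of_le (hF.le_of_tendsto hF0 j) (hF.ge_of_tendsto hF1 j)
        (hG.le_of_tendsto hG0 j) (hG.ge_of_tendsto hG1 j)⟩
  have hΔ₂ : ∀ j, |fd 1 (fd 1 (F - G)) j|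
      ≤ (∑' k, |(fd 1)^[3] F k|) + ∑' k, |(fd 1)^[3] G k| := fun j => by
    rw [fd_sub, fd_sub]
    exact (abs_sub _ _).trans
      (add_le_add (hF.abs_fd_fd_le_tsum hF0 hF1 j) (hG.abs_fd_fd_le_tsum hG0 hG1 j))
  simpa only [fd_sub, Pi.sub_apply] using abs_fd_le_four_mul_sqrt_mul_sqrt hdK hΔ₂ k
end
end

section
/- If X₁ and X₂ are independent integer-valued random variables, then for all positive integers n₁, n₂, m: D_{n₁+n₂,m}(ℒ(X₁+X₂)) ≤ D_{n₁,m}(ℒ(X₁)) · D_{n₂,m}(ℒ(X₂)). -/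
open MeasureTheory ProbabilityTheory Filter

noncomputable section

/-- The smoothness functional `D_{n,m}` of a law `ν` on `ℤ`. -/
def Dnm (n m : ℕ) (ν : Measure ℤ) : ℝ :=
  sSup {x | ∃ g : ℤ → ℝ, (∀ i, |g i| ≤ 1) ∧ x = |∫ i, (fd m)^[n] g i ∂ν|}

lemma fd_iter_bound (m : ℤ) (n : ℕ) (h : ℤ → ℝ) (C : ℝ) (hC : ∀ j, |h j| ≤ C) :
    ∀ j, |(fd m)^[n] h j| ≤ 2 ^ n * C := by
  induction n generalizing h C with
  | zero => simpa using hC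
  | succ n ih =>
    intro j
    rw [Function.iterate_succ_apply]
    have h1 : ∀ j, |fd m h j| ≤ 2 * C := by
      intro j
      have := hC (j + m); have := hC j
      calc |fd m h j| = |h (j + m) - h j| := rfl
        _ ≤ |h (j + m)| + |h j| := abs_sub _ _
        _ ≤ 2 * C := by linarith
    have := ih (fd m h) (2 * C) h1 j
    calc |(fd m)^[n] (fd m h) j| ≤ 2 ^ n * (2 * C) := this
      _ = 2 ^ (n + 1) * C := by ring

lemma fd_iter_zero (m : ℤ) (n : ℕ) : (fd m)^[n] (fun _ => (0 : ℝ)) = fun _ => 0 := by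
  induction n with
  | zero => rfl
  | succ n ih =>
    rw [Function.iterate_succ_apply]
    have : fd m (fun _ => (0 : ℝ)) = fun _ => 0 := by funext j; simp [fd]
    rw [this, ih]

lemma fd_iter_smul (m : ℤ) (n : ℕ) (c : ℝ) (g : ℤ → ℝ) :
    (fd m)^[n] (fun j => c * g j) = fun j => c * (fd m)^[n] g j := by
  induction n generalizing g with
  | zero => rfl
  | succ n ih =>
    rw [Function.iterate_succ_apply, Function.iterate_succ_apply]
    have : fd m (fun j => c * g j) = fun j => c * fd m g j := by
      funext j; simp [fd]; ring
    rw [this, ih]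

lemma fd_iter_translate (m : ℤ) (n : ℕ) (h : ℤ → ℝ) (a : ℤ) :
    (fd m)^[n] (fun j => h (j + a)) = fun j => (fd m)^[n] h (j + a) := by
  induction n generalizing h with
  | zero => rfl
  | succ n ih =>
    rw [Function.iterate_succ_apply, Function.iterate_succ_apply]
    have : fd m (fun j => h (j + a)) = fun j => fd m h (j + a) := by
      funext j; simp only [fd, add_right_comm]
    rw [this, ih]

lemma integrable_bdd {α : Type*} [MeasurableSpace α] [Countable α]
    [MeasurableSingletonClass α] (ν : Measure α) [IsFiniteMeasure ν]
    (f : α → ℝ) (C : ℝ) (hC : ∀ j, |f j| ≤ C) : Integrable f ν :=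
  (integrable_const C).mono' (measurable_of_countable f).aestronglyMeasurable
    (Filter.Eventually.of_forall fun j => by simpa using hC j)

lemma abs_integral_le_Dnm (n m : ℕ) (ν : Measure ℤ) [IsProbabilityMeasure ν]
    (g : ℤ → ℝ) (hg : ∀ i, |g i| ≤ 1) :
    |∫ i, (fd m)^[n] g i ∂ν| ≤ Dnm n m ν := by
  apply le_csSup
  · refine ⟨2 ^ n, ?_⟩
    rintro x ⟨g', hg', rfl⟩
    have := norm_integral_le_of_norm_le_const (μ := ν)
      (f := fun i => (fd m)^[n] g' i) (C := 2 ^ n)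
      (Filter.Eventually.of_forall fun i => by
        simpa using (by simpa using fd_iter_bound m n g' 1 hg' i))
    simpa [Real.norm_eq_abs] using this
  · exact ⟨g, hg, rfl⟩

lemma Dnm_nonneg (n m : ℕ) (ν : Measure ℤ) [IsProbabilityMeasure ν] :
    0 ≤ Dnm n m ν := by
  have := abs_integral_le_Dnm n m ν (fun _ => 0) (fun i => by simp)
  simpa [fd_iter_zero] using (abs_nonneg _).trans this

lemma abs_integral_le_Dnm_mul (n m : ℕ) (ν : Measure ℤ) [IsProbabilityMeasure ν]
    (φ : ℤ → ℝ) (C : ℝ) (hC : 0 ≤ C) (hφ : ∀ a, |φ a| ≤ C) :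
    |∫ a, (fd m)^[n] φ a ∂ν| ≤ Dnm n m ν * C := by
  rcases eq_or_lt_of_le hC with h0 | hpos
  · have hφ0 : φ = fun _ => 0 := by
      funext a
      have := hφ a; rw [← h0] at this
      simpa using le_antisymm this (abs_nonneg _)
    rw [hφ0, fd_iter_zero]
    simp [← h0]
  · set g : ℤ → ℝ := fun j => C⁻¹ * φ j with hg
    have hg1 : ∀ i, |g i| ≤ 1 := by
      intro i
      rw [hg]
      simp only [abs_mul, abs_inv, abs_of_pos hpos]
      rw [inv_mul_le_iff₀ hpos]
      simpa using hφ i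
    have hφeq : φ = fun j => C * g j := by
      funext j; rw [hg]; field_simp
    rw [hφeq, fd_iter_smul]
    rw [integral_const_mul, abs_mul, abs_of_pos hpos, mul_comm]
    exact mul_le_mul_of_nonneg_right (abs_integral_le_Dnm n m ν g hg1) hC

lemma fd_integral_comm (m : ℤ) (n : ℕ) (ν : Measure ℤ) [IsProbabilityMeasure ν]
    (h : ℤ → ℝ) (C : ℝ) (hC : ∀ j, |h j| ≤ C) :
    (fd m)^[n] (fun a => ∫ b, h (a + b) ∂ν) = fun a => ∫ b, (fd m)^[n] h (a + b) ∂ν := by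
  induction n with
  | zero => rfl
  | succ n ih =>
    rw [Function.iterate_succ_apply', Function.iterate_succ_apply', ih]
    funext a
    have hint : ∀ c : ℤ, Integrable (fun b => (fd m)^[n] h (c + b)) ν := by
      intro c
      exact integrable_bdd ν _ (2 ^ n * C) (fun b => fd_iter_bound m n h C hC _)
    calc fd m (fun a => ∫ b, (fd m)^[n] h (a + b) ∂ν) a
        = (∫ b, (fd m)^[n] h (a + m + b) ∂ν) - ∫ b, (fd m)^[n] h (a + b) ∂ν := rfl
      _ = ∫ b, ((fd m)^[n] h (a + m + b) - (fd m)^[n] h (a + b)) ∂ν :=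
          (integral_sub (hint (a + m)) (hint a)).symm
      _ = ∫ b, fd m ((fd m)^[n] h) (a + b) ∂ν := by
          congr 1
          funext b
          simp only [fd]
          rw [add_right_comm]

/-- Lemma 5, first part: submultiplicativity of `D` over independent summands. -/
theorem Dnm_add_le_mul
    {Ω : Type*} [MeasurableSpace Ω] (μ : Measure Ω) [IsProbabilityMeasure μ]
    (X₁ X₂ : Ω → ℤ) (hX₁ : Measurable X₁) (hX₂ : Measurable X₂)
    (hind : IndepFun X₁ X₂ μ)
    (n₁ n₂ m : ℕ) (hn₁ : 0 < n₁) (hn₂ : 0 < n₂) (hm : 0 < m) :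
    Dnm (n₁ + n₂) m (μ.map (fun ω => X₁ ω + X₂ ω))
      ≤ Dnm n₁ m (μ.map X₁) * Dnm n₂ m (μ.map X₂) := by
  have hν₁ : IsProbabilityMeasure (μ.map X₁) := Measure.isProbabilityMeasure_map hX₁.aemeasurable
  have hν₂ : IsProbabilityMeasure (μ.map X₂) := Measure.isProbabilityMeasure_map hX₂.aemeasurable
  set ν₁ := μ.map X₁
  set ν₂ := μ.map X₂
  have hνS : IsProbabilityMeasure (μ.map (fun ω => X₁ ω + X₂ ω)) :=
    Measure.isProbabilityMeasure_map ((hX₁.add hX₂).aemeasurable)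
  apply Real.sSup_le
  · rintro x ⟨g, hg, rfl⟩
    set N := n₁ + n₂
    set F : ℤ → ℝ := (fd m)^[N] g with hF
    have hFbd : ∀ j, |F j| ≤ 2 ^ N := fun j => by
      simpa using fd_iter_bound m N g 1 hg j
    -- step 1 : push forward
    have step1 : ∫ j, F j ∂(μ.map (fun ω => X₁ ω + X₂ ω)) = ∫ ω, F (X₁ ω + X₂ ω) ∂μ :=
      integral_map (hX₁.add hX₂).aemeasurable (measurable_of_countable F).aestronglyMeasurable
    -- step 2 : independence
    have hmap : μ.map (fun ω => (X₁ ω, X₂ ω)) = ν₁.prod ν₂ :=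
      (indepFun_iff_map_prod_eq_prod_map_map hX₁.aemeasurable hX₂.aemeasurable).mp hind
    have step2 : ∫ ω, F (X₁ ω + X₂ ω) ∂μ = ∫ p : ℤ × ℤ, F (p.1 + p.2) ∂(ν₁.prod ν₂) := by
      rw [← hmap]
      exact (integral_map (hX₁.prodMk hX₂).aemeasurable
        (measurable_of_countable (fun p : ℤ × ℤ => F (p.1 + p.2))).aestronglyMeasurable).symm
    -- step 3 : Fubini
    have step3 : ∫ p : ℤ × ℤ, F (p.1 + p.2) ∂(ν₁.prod ν₂)
        = ∫ a, ∫ b, F (a + b) ∂ν₂ ∂ν₁ := by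
      exact integral_prod _ (integrable_bdd _ _ (2 ^ N) (fun p => hFbd _))
    -- step 4 : inner integral as iterated difference
    set h : ℤ → ℝ := (fd m)^[n₂] g with hh
    have hhbd : ∀ j, |h j| ≤ 2 ^ n₂ := fun j => by
      simpa using fd_iter_bound m n₂ g 1 hg j
    have hFh : ∀ j, F j = (fd m)^[n₁] h j := fun j => by
      rw [hF, hh, Function.iterate_add_apply]
    set φ : ℤ → ℝ := fun a => ∫ b, h (a + b) ∂ν₂ with hφ
    have step4 : ∀ a, ∫ b, F (a + b) ∂ν₂ = (fd m)^[n₁] φ a := by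
      intro a
      rw [hφ, fd_integral_comm m n₁ ν₂ h (2 ^ n₂) hhbd]
      exact integral_congr_ae (Filter.Eventually.of_forall fun b => hFh (a + b))
    have step4' : ∫ a, ∫ b, F (a + b) ∂ν₂ ∂ν₁ = ∫ a, (fd m)^[n₁] φ a ∂ν₁ :=
      integral_congr_ae (Filter.Eventually.of_forall step4)
    -- bound on φ
    have hφbd : ∀ a, |φ a| ≤ Dnm n₂ m ν₂ := by
      intro a
      have htr : (fun b => h (a + b)) = (fd m)^[n₂] (fun j => g (j + a)) := by
        rw [fd_iter_translate]
        funext b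
        rw [hh, add_comm b a]
      rw [hφ]
      calc |∫ b, h (a + b) ∂ν₂| = |∫ b, (fd m)^[n₂] (fun j => g (j + a)) b ∂ν₂| := by rw [htr]
        _ ≤ Dnm n₂ m ν₂ := abs_integral_le_Dnm n₂ m ν₂ _ (fun i => hg _)
    -- conclude
    rw [step1, step2, step3, step4']
    exact abs_integral_le_Dnm_mul n₁ m ν₁ φ (Dnm n₂ m ν₂) (Dnm_nonneg _ _ _) hφbd
  · exact mul_nonneg (Dnm_nonneg _ _ _) (Dnm_nonneg _ _ _)
end
end

section
/- Let (X, X') be an exchangeable pair and W = W(X), W' = W(X') be integer-valued. For m ∈ ℤ define Q_m(x) = P(W' = W + m | X = x) and q_m = E Q_m(X). Then for every positive integer m with q_m > 0, D_{1,m}(ℒ(W)) ≤ (√Var Q_m(X) + √Var Q_{−m}(X)) / q_m. -/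
open MeasureTheory ProbabilityTheory Filter

noncomputable section

/-!
Write `A_k = {W' = W + k}`, so that `Q_k = P(A_k | X)`. Exchangeability turns
`E[g(W + m) 1_{A_m}] = E[g(W') 1_{A_m}]` into `E[g(W) 1_{A_{-m}}]`, and conditioning on `X`
gives the Stein-type identity `E[g(W + m) Q_m] = E[g(W) Q_{-m}]`; with `g = 1` it also gives
`E Q_{-m} = E Q_m = q`. Hence
`q (E g(W + m) - E g(W)) = E[g(W) (Q_{-m} - q)] - E[g(W + m) (Q_m - q)]`,
and for `|g| ≤ 1` each term is at most a mean absolute deviation `E|Q_k - q| ≤ √Var Q_k`.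
-/

theorem Dnm_one_le_of_forall {m : ℕ} {ν : Measure ℤ} {C : ℝ} (hC : 0 ≤ C)
    (h : ∀ g : ℤ → ℝ, (∀ i, |g i| ≤ 1) → |∫ i, fd m g i ∂ν| ≤ C) : Dnm 1 m ν ≤ C := by
  refine Real.sSup_le ?_ hC
  rintro x ⟨g, hg, rfl⟩
  exact h g hg

section

variable {Ω : Type*} {m mΩ : MeasurableSpace Ω} {μ : Measure Ω}

theorem integral_abs_sub_integral_le_sqrt_variance [IsProbabilityMeasure μ] {Y : Ω → ℝ}
    (hY : MemLp Y 2 μ) : ∫ ω, |Y ω - μ[Y]| ∂μ ≤ √(variance Y μ) := by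
  have hZ : MemLp (fun ω => |Y ω - μ[Y]|) 2 μ := (hY.sub (memLp_const _)).abs
  have hZ2 : μ[(fun ω => |Y ω - μ[Y]|) ^ 2] = variance Y μ := by
    simp only [Pi.pow_apply, sq_abs, variance_eq_integral hY.aemeasurable]
  have hsq : (μ[fun ω => |Y ω - μ[Y]|]) ^ 2 ≤ variance Y μ := by
    have := variance_nonneg (fun ω => |Y ω - μ[Y]|) μ
    rw [variance_eq_sub hZ, hZ2] at this
    linarith
  exact (le_abs_self _).trans (Real.abs_le_sqrt hsq)

theorem abs_integral_mul_le_integral_abs {h Y : Ω → ℝ} (hh : ∀ ω, |h ω| ≤ 1)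
    (hY : Integrable Y μ) : |∫ ω, h ω * Y ω ∂μ| ≤ ∫ ω, |Y ω| ∂μ := by
  refine (norm_integral_le_integral_norm _).trans <| integral_mono_of_nonneg
    (ae_of_all _ fun ω => norm_nonneg (h ω * Y ω)) hY.abs (ae_of_all _ fun ω => ?_)
  simp only [Real.norm_eq_abs, abs_mul]
  exact mul_le_of_le_one_left (abs_nonneg _) (hh ω)

theorem integral_mul_condExp_of_bound [IsFiniteMeasure μ] (hm : m ≤ mΩ)
    {h Y : Ω → ℝ} (hh : StronglyMeasurable[m] h) (C : ℝ) (hhC : ∀ᵐ ω ∂μ, ‖h ω‖ ≤ C)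
    (hY : Integrable Y μ) : ∫ ω, h ω * μ[Y | m] ω ∂μ = ∫ ω, h ω * Y ω ∂μ :=
  (integral_congr_ae (condExp_stronglyMeasurable_mul_of_bound hm hh hY C hhC)).symm.trans
    (integral_condExp hm)

theorem memLp_condExp_indicator_one [IsFiniteMeasure μ] (s : Set Ω)
    (p : ENNReal) : MemLp (μ[s.indicator (fun _ => (1 : ℝ)) | m]) p μ := by
  refine MemLp.of_bound integrable_condExp.aestronglyMeasurable 1 ?_
  refine ae_bdd_abs_condExp_of_ae_bdd_abs (ae_of_all _ fun ω => ?_)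
  by_cases hω : ω ∈ s <;> simp [hω]

theorem abs_integral_fd_map_le_of_integral_mul_eq [IsProbabilityMeasure μ] {W : Ω → ℤ}
    (hW : Measurable W) {Q Q' : Ω → ℝ} (hQ : MemLp Q 2 μ) (hQ' : MemLp Q' 2 μ) {q : ℝ}
    (hq : 0 < q) (hEQ : μ[Q] = q) (hEQ' : μ[Q'] = q) {k : ℤ} {g : ℤ → ℝ} (hg : ∀ i, |g i| ≤ 1)
    (hstein : ∫ ω, g (W ω + k) * Q ω ∂μ = ∫ ω, g (W ω) * Q' ω ∂μ) :
    |∫ i, fd k g i ∂μ.map W| ≤ (√(variance Q μ) + √(variance Q' μ)) / q := by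
  have hcomp : ∀ φ : ℤ → ℝ, AEStronglyMeasurable (fun ω => φ (W ω)) μ := fun φ =>
    (Measurable.of_discrete.comp hW).aestronglyMeasurable
  have hint : ∀ φ : ℤ → ℝ, (∀ i, |φ i| ≤ 1) → Integrable (fun ω => φ (W ω)) μ := fun φ hφ =>
    .of_bound (hcomp φ) 1 (ae_of_all _ fun ω => hφ _)
  have hcenter : ∀ φ : ℤ → ℝ, (∀ i, |φ i| ≤ 1) → ∀ {Y : Ω → ℝ}, Integrable Y μ →
      ∫ ω, φ (W ω) * (Y ω - q) ∂μ = ∫ ω, φ (W ω) * Y ω ∂μ - q * ∫ ω, φ (W ω) ∂μ :=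
    fun φ hφ Y hY => by
      simp_rw [mul_sub]
      rw [integral_sub (hY.bdd_mul (hcomp φ) (ae_of_all _ fun ω => hφ _))
        ((hint φ hφ).mul_const q), integral_mul_const, mul_comm]
  have hmap : ∫ i, fd k g i ∂μ.map W = ∫ ω, g (W ω + k) ∂μ - ∫ ω, g (W ω) ∂μ := by
    rw [integral_map hW.aemeasurable Measurable.of_discrete.aestronglyMeasurable]
    exact integral_sub (hint (fun i => g (i + k)) fun _ => hg _) (hint g hg)
  have hsplit : q * (∫ ω, g (W ω + k) ∂μ - ∫ ω, g (W ω) ∂μ)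
      = ∫ ω, g (W ω) * (Q' ω - q) ∂μ - ∫ ω, g (W ω + k) * (Q ω - q) ∂μ := by
    rw [hcenter g hg (hQ'.integrable one_le_two),
      hcenter (fun i => g (i + k)) (fun _ => hg _) (hQ.integrable one_le_two), hstein]
    ring
  have hdev : ∫ ω, |Q ω - q| ∂μ ≤ √(variance Q μ) :=
    hEQ ▸ integral_abs_sub_integral_le_sqrt_variance hQ
  have hdev' : ∫ ω, |Q' ω - q| ∂μ ≤ √(variance Q' μ) :=
    hEQ' ▸ integral_abs_sub_integral_le_sqrt_variance hQ'
  rw [hmap, le_div_iff₀ hq]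
  calc |∫ ω, g (W ω + k) ∂μ - ∫ ω, g (W ω) ∂μ| * q
      = |∫ ω, g (W ω) * (Q' ω - q) ∂μ - ∫ ω, g (W ω + k) * (Q ω - q) ∂μ| := by
        rw [← hsplit, abs_mul, abs_of_pos hq, mul_comm]
    _ ≤ |∫ ω, g (W ω) * (Q' ω - q) ∂μ| + |∫ ω, g (W ω + k) * (Q ω - q) ∂μ| := abs_sub _ _
    _ ≤ ∫ ω, |Q' ω - q| ∂μ + ∫ ω, |Q ω - q| ∂μ :=
        add_le_add
          (abs_integral_mul_le_integral_abs (fun _ => hg _)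
            ((hQ'.integrable one_le_two).sub (integrable_const q)))
          (abs_integral_mul_le_integral_abs (fun _ => hg _)
            ((hQ.integrable one_le_two).sub (integrable_const q)))
    _ ≤ √(variance Q μ) + √(variance Q' μ) := by linarith

theorem integral_mul_indicator_shift_eq_of_identDistrib_swap {W W' : Ω → ℤ}
    (hexch : IdentDistrib (fun ω => (W ω, W' ω)) (fun ω => (W' ω, W ω)) μ μ) (g : ℤ → ℝ)
    (k : ℤ) :
    ∫ ω, g (W ω + k) * {ω | W' ω = W ω + k}.indicator (fun _ => (1 : ℝ)) ω ∂μ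
      = ∫ ω, g (W ω) * {ω | W' ω = W ω + -k}.indicator (fun _ => (1 : ℝ)) ω ∂μ := by
  let φ : ℤ × ℤ → ℝ := fun p => if p.2 = p.1 + k then g p.2 else 0
  have hswap := (hexch.comp (Measurable.of_discrete (f := φ))).integral_eq
  refine (integral_congr_ae (ae_of_all _ fun ω => ?_)).trans
    (hswap.trans (integral_congr_ae (ae_of_all _ fun ω => ?_)))
  · by_cases h : W' ω = W ω + k <;> simp [φ, h]
  · by_cases h : W ω = W' ω + k
    · simp [φ, h]
    · have h' : W' ω ≠ W ω + -k := by omega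
      simp [φ, h, h']

theorem integral_mul_condExp_indicator_shift_eq [IsFiniteMeasure μ]
    (hm : m ≤ mΩ) {W W' : Ω → ℤ} (hW : Measurable[m] W) (hW' : Measurable W')
    (hexch : IdentDistrib (fun ω => (W ω, W' ω)) (fun ω => (W' ω, W ω)) μ μ) {g : ℤ → ℝ}
    {C : ℝ} (hg : ∀ i, |g i| ≤ C) (k : ℤ) :
    ∫ ω, g (W ω + k) * μ[{ω | W' ω = W ω + k}.indicator (fun _ => (1 : ℝ)) | m] ω ∂μ
      = ∫ ω, g (W ω) * μ[{ω | W' ω = W ω + -k}.indicator (fun _ => (1 : ℝ)) | m] ω ∂μ := by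
  have hA : ∀ j : ℤ, MeasurableSet {ω | W' ω = W ω + j} := fun j =>
    measurableSet_eq_fun hW' ((hW.mono hm le_rfl).add_const j)
  have hcomp : ∀ φ : ℤ → ℝ, StronglyMeasurable[m] (fun ω => φ (W ω)) := fun φ =>
    (Measurable.of_discrete.comp hW).stronglyMeasurable
  rw [integral_mul_condExp_of_bound (μ := μ) hm (hcomp fun i => g (i + k)) C
      (ae_of_all _ fun ω => hg _) ((integrable_const (1 : ℝ)).indicator (hA k)),
    integral_mul_condExp_of_bound (μ := μ) hm (hcomp g) C (ae_of_all _ fun ω => hg _)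
      ((integrable_const (1 : ℝ)).indicator (hA (-k)))]
  exact integral_mul_indicator_shift_eq_of_identDistrib_swap hexch g k

end

theorem D1m_le_exchangeable_pair_general
    {Ω α : Type*} [MeasurableSpace Ω] [MeasurableSpace α]
    (μ : Measure Ω) [IsProbabilityMeasure μ]
    (X X' : Ω → α) (hX : Measurable X) (hX' : Measurable X')
    (hexch : μ.map (fun ω => (X ω, X' ω)) = μ.map (fun ω => (X' ω, X ω)))
    (f : α → ℤ) (hf : Measurable f)
    (Q : ℤ → Ω → ℝ)
    (hQ : ∀ k : ℤ, Q k =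
      μ[({ω | f (X' ω) = f (X ω) + k} : Set Ω).indicator (fun _ => (1 : ℝ)) |
        MeasurableSpace.comap X inferInstance])
    (m : ℕ)
    (q : ℝ) (hq : q = (μ {ω | f (X' ω) = f (X ω) + m}).toReal) (hq0 : 0 < q) :
    Dnm 1 m (μ.map (fun ω => f (X ω)))
      ≤ (Real.sqrt (variance (Q m) μ) + Real.sqrt (variance (Q (-(m : ℤ))) μ)) / q := by
  have hmX : MeasurableSpace.comap X inferInstance ≤ _ := hX.comap_le
  have hWX : Measurable[MeasurableSpace.comap X inferInstance] (fun ω => f (X ω)) :=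
    hf.comp (comap_measurable X)
  have hexchW : IdentDistrib (fun ω => (f (X ω), f (X' ω))) (fun ω => (f (X' ω), f (X ω))) μ μ :=
    IdentDistrib.comp ⟨(hX.prodMk hX').aemeasurable, (hX'.prodMk hX).aemeasurable, hexch⟩
      (hf.prodMap hf)
  have hstein : ∀ g : ℤ → ℝ, (∀ i, |g i| ≤ 1) →
      ∫ ω, g (f (X ω) + m) * Q m ω ∂μ = ∫ ω, g (f (X ω)) * Q (-(m : ℤ)) ω ∂μ := fun g hg => by
    rw [hQ, hQ]
    exact integral_mul_condExp_indicator_shift_eq hmX hWX (hf.comp hX') hexchW hg m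
  have hEQ : μ[Q m] = q := by
    have hA : MeasurableSet {ω | f (X' ω) = f (X ω) + m} :=
      measurableSet_eq_fun (hf.comp hX') ((hWX.mono hmX le_rfl).add_const _)
    rw [hQ, integral_condExp hmX, integral_indicator_const _ hA, hq]
    simp [Measure.real]
  have hEQ' : μ[Q (-(m : ℤ))] = q := by
    simpa [hEQ] using (hstein (fun _ => 1) (by simp)).symm
  refine Dnm_one_le_of_forall (div_nonneg (by positivity) hq0.le) fun g hg => ?_
  exact abs_integral_fd_map_le_of_integral_mul_eq (hf.comp hX)
    (hQ m ▸ memLp_condExp_indicator_one _ 2) (hQ _ ▸ memLp_condExp_indicator_one _ 2)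
    hq0 hEQ hEQ' hg (hstein g hg)

/-- Theorem 6 (exchangeable pairs): if `(X,X')` is an exchangeable pair, `W = f(X)`,
`W' = f(X')`, `Q_k = P(W' = W + k | X)` and `q_m = P(W' = W + m) > 0`, then
`D_{1,m}(ℒ(W)) ≤ (√Var Q_m + √Var Q_{−m}) / q_m`. -/
theorem D1m_le_exchangeable_pair
    {Ω α : Type*} [MeasurableSpace Ω] [MeasurableSpace α]
    (μ : Measure Ω) [IsProbabilityMeasure μ]
    (X X' : Ω → α) (hX : Measurable X) (hX' : Measurable X')
    (hexch : μ.map (fun ω => (X ω, X' ω)) = μ.map (fun ω => (X' ω, X ω)))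
    (f : α → ℤ) (hf : Measurable f)
    (Q : ℤ → Ω → ℝ)
    (hQ : ∀ k : ℤ, Q k =
      μ[({ω | f (X' ω) = f (X ω) + k} : Set Ω).indicator (fun _ => (1 : ℝ)) |
        MeasurableSpace.comap X inferInstance])
    (m : ℕ) (hm : 0 < m)
    (q : ℝ) (hq : q = (μ {ω | f (X' ω) = f (X ω) + m}).toReal) (hq0 : 0 < q) :
    Dnm 1 m (μ.map (fun ω => f (X ω)))
      ≤ (Real.sqrt (variance (Q m) μ) + Real.sqrt (variance (Q (-(m : ℤ))) μ)) / q :=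
  D1m_le_exchangeable_pair_general μ X X' hX hX' hexch f hf Q hQ m q hq hq0
end
end

section
/- Consider the Curie–Weiss model: σ ∈ {−1,1}ⁿ with P(σ) proportional to exp{(β/n)Σ_{i<j}σᵢσⱼ + hΣᵢσᵢ}, and the Glauber dynamics Markov chain where a uniformly chosen site is resampled from the conditional Gibbs measure. Let W = Σᵢσᵢ, W' the magnetization after one step, Q₂(σ) = P(W' = W+2 | σ), and m = W/n. Then Q₂(σ) = 1/4 − m/4 + (1−m)·tanh(βm+h)/4 + (1/(4n))Σᵢ(1−σᵢ)(tanh(βmᵢ+h) − tanh(βm+h)), where mᵢ = (1/n)Σ_{j≠i}σⱼ; consequently, for the unique solution m₀ of m₀ = tanh(βm₀+h) with 0<β<1, there is a constant C depending only on β and h such that |Q₂(σ) − (1−m₀²)/4| ≤ C(|m − m₀| + 1/n). -/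
open Finset

/-!
Site `i` contributes to `Q₂` only when `σᵢ = -1`, i.e. with weight `(1 - σᵢ)/2`, and is then
flipped up with probability `(1 + tanh (β mᵢ + h))/2`. Replacing `mᵢ` by `m` everywhere and using
`∑ᵢ (1 - σᵢ) = n (1 - m)` gives the mean-field term `(1 - m)(1 + tanh (β m + h))/4`; the correction
is `O(|β|/n)` because `|mᵢ - m| = 1/n` and `tanh` is 1-Lipschitz. At the fixed point the mean-field
term equals `(1 - m₀)(1 + m₀)/4`, and it is Lipschitz in `m` with constant `(1 + |β|)/2`.
-/

namespace Real

theorem hasDerivAt_tanh (x : ℝ) : HasDerivAt tanh (1 / cosh x ^ 2) x := by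
  have hquot := (hasDerivAt_sinh x).div (hasDerivAt_cosh x) (cosh_pos x).ne'
  rw [show tanh = fun y => sinh y / cosh y from funext tanh_eq_sinh_div_cosh]
  refine hquot.congr_deriv ?_
  rw [div_left_inj' (pow_ne_zero 2 (cosh_pos x).ne')]
  linear_combination cosh_sq_sub_sinh_sq x

theorem lipschitzWith_tanh : LipschitzWith 1 tanh := by
  refine lipschitzWith_of_nnnorm_deriv_le (fun x => (hasDerivAt_tanh x).differentiableAt) fun x => ?_
  rw [(hasDerivAt_tanh x).deriv, ← NNReal.coe_le_coe, coe_nnnorm, norm_of_nonneg (by positivity),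
    NNReal.coe_one, div_le_one (by positivity)]
  nlinarith [one_le_cosh x]

theorem lipschitzWith_tanh_mul_add (β h : ℝ) :
    LipschitzWith ‖β‖₊ fun x => tanh (β * x + h) :=
  LipschitzWith.of_dist_le_mul fun x y => by
    simpa [dist_eq, ← mul_sub, abs_mul] using lipschitzWith_tanh.dist_le_mul (β * x + h) (β * y + h)

end Real

theorem sum_upFlip_div_eq {n : ℕ} (hn : 0 < n) (σ a : Fin n → ℝ) (t : ℝ) {m : ℝ}
    (hm : m = (∑ i, σ i) / n) :
    (∑ i, (1 - σ i) / 2 * ((a i + 1) / 2)) / n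
      = 1 / 4 - m / 4 + (1 - m) * t / 4 + (∑ i, (1 - σ i) * (a i - t)) / (4 * n) := by
  have hcount : ∑ i, (1 - σ i) = n * (1 - m) := by
    rw [sum_sub_distrib, sum_const, card_univ, Fintype.card_fin, nsmul_one, hm]
    field_simp
  have hsplit : ∑ i, (1 - σ i) * (a i - t)
      = 4 * ∑ i, (1 - σ i) / 2 * ((a i + 1) / 2) - (1 + t) * ∑ i, (1 - σ i) := by
    rw [mul_sum, mul_sum, ← sum_sub_distrib]
    exact sum_congr rfl fun i _ => by ring
  rw [hsplit, hcount]
  field_simp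
  ring

theorem abs_sum_mul_sub_leaveOneOut_le {n : ℕ} (σ : Fin n → ℝ) (hσ : ∀ i, σ i = 1 ∨ σ i = -1)
    {m : ℝ} (hm : m = (∑ i, σ i) / n) {mi : Fin n → ℝ}
    (hmi : ∀ i, mi i = (∑ j ∈ univ.erase i, σ j) / n) {f : ℝ → ℝ} {K : NNReal}
    (hf : LipschitzWith K f) :
    |∑ i, (1 - σ i) * (f (mi i) - f m)| ≤ 2 * K := by
  have hterm (i : Fin n) : |(1 - σ i) * (f (mi i) - f m)| ≤ 2 * K / n := by
    have hflip : |1 - σ i| ≤ 2 := by rcases hσ i with h | h <;> norm_num [h]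
    have hshift : |mi i - m| = 1 / n := by
      rw [hmi, hm, sum_erase_eq_sub (mem_univ i), ← sub_div, sub_sub_cancel_left, neg_div,
        abs_neg, abs_div, Nat.abs_cast]
      rcases hσ i with h | h <;> norm_num [h]
    have hlip : |f (mi i) - f m| ≤ K * (1 / n) := by
      simpa [Real.dist_eq, hshift] using hf.dist_le_mul (mi i) m
    calc |(1 - σ i) * (f (mi i) - f m)| = |1 - σ i| * |f (mi i) - f m| := abs_mul _ _
      _ ≤ 2 * (K * (1 / n)) := mul_le_mul hflip hlip (abs_nonneg _) zero_le_two
      _ = 2 * K / n := by ring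
  calc |∑ i, (1 - σ i) * (f (mi i) - f m)|
      ≤ ∑ i, |(1 - σ i) * (f (mi i) - f m)| := abs_sum_le_sum_abs _ _
    _ ≤ ∑ _i : Fin n, 2 * K / (n : ℝ) := sum_le_sum fun i _ => hterm i
    _ ≤ 2 * K := by
      rw [sum_const, card_univ, Fintype.card_fin, nsmul_eq_mul]
      rcases n.eq_zero_or_pos with rfl | hn
      · simp
      · rw [mul_div_cancel₀ _ (by positivity)]

theorem abs_one_sub_mul_one_add_sub_le {f : ℝ → ℝ} {K : NNReal} (hf : LipschitzWith K f)
    (hbdd : ∀ x, |f x| ≤ 1) {m₀ : ℝ} (hm₀ : f m₀ = m₀) (m : ℝ) :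
    |(1 - m) * (1 + f m) - (1 - m₀ ^ 2)| ≤ 2 * (1 + K) * |m - m₀| := by
  have h1 : |1 + f m| ≤ 2 := (abs_add_le _ _).trans (by rw [abs_one]; linarith [hbdd m])
  have h2 : |1 - m₀| ≤ 2 := (abs_sub _ _).trans (by rw [abs_one, ← hm₀]; linarith [hbdd m₀])
  have hlip : |f m - f m₀| ≤ K * |m - m₀| := by simpa [Real.dist_eq] using hf.dist_le_mul m m₀
  have hsplit : (1 - m) * (1 + f m) - (1 - m₀ ^ 2)
      = (m₀ - m) * (1 + f m) + (1 - m₀) * (f m - f m₀) := by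
    rw [hm₀]; ring
  calc |(1 - m) * (1 + f m) - (1 - m₀ ^ 2)|
      ≤ |m₀ - m| * |1 + f m| + |1 - m₀| * |f m - f m₀| := by
        rw [hsplit, ← abs_mul, ← abs_mul]; exact abs_add_le _ _
    _ ≤ |m - m₀| * 2 + 2 * (K * |m - m₀|) := by
        rw [abs_sub_comm m₀ m]; gcongr
    _ = 2 * (1 + K) * |m - m₀| := by ring

theorem curieWeiss_Q2_representation_and_bound_general
    (β h : ℝ) (m₀ : ℝ)
    (hm₀ : m₀ = Real.tanh (β * m₀ + h)) :
    ∃ C : ℝ, 0 < C ∧ ∀ n : ℕ, 0 < n → ∀ σ : Fin n → ℝ, (∀ i, σ i = 1 ∨ σ i = -1) →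
      ∀ m : ℝ, m = (∑ i, σ i) / n →
      ∀ mi : Fin n → ℝ, (∀ i, mi i = (∑ j ∈ univ.erase i, σ j) / n) →
      ∀ Q2 : ℝ,
        Q2 = (∑ i, ((1 - σ i) / 2) * ((Real.tanh (β * mi i + h) + 1) / 2)) / n →
      (Q2 = 1 / 4 - m / 4 + (1 - m) * Real.tanh (β * m + h) / 4
          + (∑ i, (1 - σ i) * (Real.tanh (β * mi i + h) - Real.tanh (β * m + h)))
            / (4 * n))
      ∧ |Q2 - (1 - m₀ ^ 2) / 4| ≤ C * (|m - m₀| + 1 / n) := by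
  refine ⟨1 + |β|, by positivity, fun n hn σ hσ m hm mi hmi Q2 hQ2 => ?_⟩
  have hrep := hQ2.trans (sum_upFlip_div_eq hn σ _ (Real.tanh (β * m + h)) hm)
  refine ⟨hrep, ?_⟩
  have hlip := Real.lipschitzWith_tanh_mul_add β h
  have hmean := abs_one_sub_mul_one_add_sub_le hlip (fun _ => (Real.abs_tanh_lt_one _).le)
    hm₀.symm m
  have herr := abs_sum_mul_sub_leaveOneOut_le σ hσ hm hmi hlip
  simp only [coe_nnnorm, Real.norm_eq_abs] at hmean herr
  calc |Q2 - (1 - m₀ ^ 2) / 4|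
      = |((1 - m) * (1 + Real.tanh (β * m + h)) - (1 - m₀ ^ 2)) / 4
          + (∑ i, (1 - σ i) * (Real.tanh (β * mi i + h) - Real.tanh (β * m + h))) / (4 * n)| := by
        rw [hrep]; congr 1; ring
    _ ≤ 2 * (1 + |β|) * |m - m₀| / 4 + 2 * |β| / (4 * n) := by
        refine (abs_add_le _ _).trans (add_le_add ?_ ?_)
        · rw [abs_div, abs_of_pos (show (0 : ℝ) < 4 by norm_num)]; gcongr
        · rw [abs_div, abs_of_pos (show (0 : ℝ) < 4 * n by positivity)]; gcongr
    _ = (1 + |β|) / 2 * |m - m₀| + |β| / 2 * (1 / n) := by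
        field_simp; ring
    _ ≤ (1 + |β|) * (|m - m₀| + 1 / n) := by
        have hinv : (0 : ℝ) ≤ 1 / n := by positivity
        nlinarith [abs_nonneg β, abs_nonneg (m - m₀), mul_nonneg (abs_nonneg β) hinv]

/-- Lemma 7, first part (Curie–Weiss model, Glauber dynamics): the representation of
`Q₂(σ) = P(W' = W + 2 | σ)` and the estimate `|Q₂ − (1−m₀²)/4| ≤ C(|m−m₀| + 1/n)`,
where `m₀` is the solution of `m₀ = tanh(βm₀ + h)`. -/
theorem curieWeiss_Q2_representation_and_bound
    (β h : ℝ) (hβ0 : 0 < β) (hβ1 : β < 1) (m₀ : ℝ)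
    (hm₀ : m₀ = Real.tanh (β * m₀ + h)) :
    ∃ C : ℝ, 0 < C ∧ ∀ n : ℕ, 0 < n → ∀ σ : Fin n → ℝ, (∀ i, σ i = 1 ∨ σ i = -1) →
      ∀ m : ℝ, m = (∑ i, σ i) / n →
      ∀ mi : Fin n → ℝ, (∀ i, mi i = (∑ j ∈ univ.erase i, σ j) / n) →
      ∀ Q2 : ℝ,
        Q2 = (∑ i, ((1 - σ i) / 2) * ((Real.tanh (β * mi i + h) + 1) / 2)) / n →
      (Q2 = 1 / 4 - m / 4 + (1 - m) * Real.tanh (β * m + h) / 4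
          + (∑ i, (1 - σ i) * (Real.tanh (β * mi i + h) - Real.tanh (β * m + h)))
            / (4 * n))
      ∧ |Q2 - (1 - m₀ ^ 2) / 4| ≤ C * (|m - m₀| + 1 / n) :=
  curieWeiss_Q2_representation_and_bound_general β h m₀ hm₀
end

section
/- In the Curie–Weiss Glauber dynamics, with Q₂(σ) = P(W'=W+2|σ) = (1/n)Σᵢ ((1−σᵢ)/2)·((tanh(βmᵢ+h)+1)/2) and Q_{2,2}(σ) = P(W'=W+2, W''=W'+2 | σ) for two consecutive steps, one has |Q_{2,2}(σ) − Q₂(σ)²| = O(1/n) uniformly in σ; more precisely |Q_{2,2}(σ) − Q₂(σ)²| ≤ (1/(8n²))Σᵢ(1−σᵢ)(tanh(βmᵢ+h)+1)² + (1/(8n²))Σ_{i≠j}(1−σᵢ)(1−σⱼ)|tanh(βmᵢ+h)+1|·|tanh(βm_{i,j}+β/n+h) − tanh(βmⱼ+h)|, and the right-hand side is at most C/n for a constant C depending only on β and h. -/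
open Finset

/-!
Put aᵢ = 1 − σᵢ ∈ {0, 2}, uᵢ = tanh(βmᵢ + h) + 1 and xᵢ = aᵢuᵢ. Then 16n²Q₂² = (Σᵢ xᵢ)²
= Σ_{i≠j} xᵢxⱼ + Σᵢ xᵢ², so 16n²(Q_{2,2} − Q₂²) = Σ_{i≠j} xᵢaⱼ(tanh(βm_{i,j} + β/n + h) − tanh(βmⱼ + h))
− Σᵢ xᵢ². The diagonal sum is O(n). Off the diagonal, βm_{i,j} + β/n is the field at j once σᵢ has
been flipped to 1, so it differs from βmⱼ by β(1 − σᵢ)/n; as tanh is 1-Lipschitz, each of the n²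
terms is O(1/n).
-/

namespace Real

theorem abs_tanh_sub_tanh_le (x y : ℝ) : |tanh x - tanh y| ≤ |x - y| := by
  simpa only [dist_eq_norm, norm_eq_abs, NNReal.coe_one, one_mul] using
    lipschitzWith_tanh.dist_le_mul x y

end Real

open Real

section

variable {ι : Type*} [Fintype ι] [DecidableEq ι]

theorem abs_tanh_field_flip_sub_le (β h : ℝ) {N : ℝ}
    (hN : 0 ≤ N) (σ : ι → ℝ) {i j : ι} (hσi : σ i = 1 ∨ σ i = -1) (hij : i ≠ j) :
    |tanh (β * ((∑ k ∈ (univ.erase i).erase j, σ k) / N) + β / N + h)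
        - tanh (β * ((∑ k ∈ univ.erase j, σ k) / N) + h)| ≤ 2 * |β| / N := by
  have hσ : 0 ≤ 1 - σ i ∧ 1 - σ i ≤ 2 := by rcases hσi with h | h <;> norm_num [h]
  have hsum : ∑ k ∈ univ.erase j, σ k = ∑ k ∈ (univ.erase i).erase j, σ k + σ i := by
    rw [erase_right_comm, sum_erase_add _ _ (mem_erase.2 ⟨hij, mem_univ i⟩)]
  have harg : β * ((∑ k ∈ (univ.erase i).erase j, σ k) / N) + β / N + h
      - (β * ((∑ k ∈ univ.erase j, σ k) / N) + h) = β * (1 - σ i) / N := by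
    rw [hsum]; ring
  calc _ ≤ |β * (1 - σ i) / N| := harg ▸ abs_tanh_sub_tanh_le _ _
    _ = |β| * (1 - σ i) / N := by rw [abs_div, abs_mul, abs_of_nonneg hσ.1, abs_of_nonneg hN]
    _ ≤ |β| * 2 / N := by gcongr; exact hσ.2
    _ = 2 * |β| / N := by ring

theorem sum_offDiag_sub_sq_sum {R : Type*} [CommRing R] (x : ι → R) (y : ι → ι → R) :
    ∑ i, ∑ j ∈ univ.erase i, x i * y i j - (∑ i, x i) ^ 2
      = ∑ i, ∑ j ∈ univ.erase i, x i * (y i j - x j) - ∑ i, x i ^ 2 := by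
  have hsq : (∑ i, x i) ^ 2 = ∑ i, ∑ j ∈ univ.erase i, x i * x j + ∑ i, x i ^ 2 := by
    rw [sq, sum_mul_sum, ← sum_add_distrib]
    exact sum_congr rfl fun i _ => by rw [← sum_erase_add _ _ (mem_univ i), sq]
  rw [hsq]
  simp only [mul_sub, sum_sub_distrib]
  ring

theorem abs_pairSum_sub_sq_le (a t : ι → ℝ) (s : ι → ι → ℝ) (ha : ∀ i, a i = 0 ∨ a i = 2)
    (N : ℝ) :
    |(∑ i, ∑ j ∈ univ.erase i, a i * (t i + 1) * a j * (s i j + 1)) / (16 * N ^ 2)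
        - ((∑ i, a i / 2 * ((t i + 1) / 2)) / N) ^ 2|
      ≤ (∑ i, a i * (t i + 1) ^ 2) / (8 * N ^ 2)
        + (∑ i, ∑ j ∈ univ.erase i, a i * a j * |t i + 1| * |s i j - t j|) / (8 * N ^ 2) := by
  have ha0 : ∀ i, 0 ≤ a i := fun i => by rcases ha i with h | h <;> simp [h]
  have ha_sq : ∀ i, a i ^ 2 = 2 * a i := fun i => by rcases ha i with h | h <;> norm_num [h]
  set x : ι → ℝ := fun i => a i * (t i + 1)
  have hdiff := sum_offDiag_sub_sq_sum x fun i j => a j * (s i j + 1)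
  have hdiag : ∑ i, x i ^ 2 = 2 * ∑ i, a i * (t i + 1) ^ 2 := by
    rw [mul_sum]
    exact sum_congr rfl fun i _ => by simp only [x]; rw [mul_pow, ha_sq]; ring
  have hoff : |∑ i, ∑ j ∈ univ.erase i, x i * (a j * (s i j + 1) - x j)|
      ≤ 2 * ∑ i, ∑ j ∈ univ.erase i, a i * a j * |t i + 1| * |s i j - t j| := by
    rw [mul_sum]
    refine (abs_sum_le_sum_abs _ _).trans (sum_le_sum fun i _ => ?_)
    rw [mul_sum]
    refine (abs_sum_le_sum_abs _ _).trans (sum_le_sum fun j _ => ?_)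
    have hterm : x i * (a j * (s i j + 1) - x j) = a i * a j * (t i + 1) * (s i j - t j) := by
      simp only [x]; ring
    rw [hterm, abs_mul, abs_mul, abs_mul, abs_of_nonneg (ha0 i), abs_of_nonneg (ha0 j)]
    linarith [mul_nonneg (mul_nonneg (mul_nonneg (ha0 i) (ha0 j)) (abs_nonneg (t i + 1)))
      (abs_nonneg (s i j - t j))]
  have hQ : (∑ i, ∑ j ∈ univ.erase i, a i * (t i + 1) * a j * (s i j + 1)) / (16 * N ^ 2)
        - ((∑ i, a i / 2 * ((t i + 1) / 2)) / N) ^ 2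
      = (∑ i, ∑ j ∈ univ.erase i, x i * (a j * (s i j + 1)) - (∑ i, x i) ^ 2) / (16 * N ^ 2) := by
    have hQ2 : ∑ i, a i / 2 * ((t i + 1) / 2) = (∑ i, x i) / 4 := by
      rw [sum_div]; exact sum_congr rfl fun i _ => by ring
    rw [hQ2]
    simp only [x, mul_assoc]
    ring
  rw [hQ, hdiff, abs_div, abs_of_nonneg (by positivity : (0 : ℝ) ≤ 16 * N ^ 2), hdiag]
  calc _ ≤ (2 * ∑ i, a i * (t i + 1) ^ 2
          + 2 * ∑ i, ∑ j ∈ univ.erase i, a i * a j * |t i + 1| * |s i j - t j|) / (16 * N ^ 2) := by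
        gcongr
        refine (abs_sub _ _).trans ?_
        have hD : 0 ≤ ∑ i, a i * (t i + 1) ^ 2 := sum_nonneg fun i _ => by have := ha0 i; positivity
        rw [abs_of_nonneg (mul_nonneg zero_le_two hD)]
        linarith
    _ = _ := by ring

theorem pairSum_error_le_inv_card_add (a t : ι → ℝ) (s : ι → ι → ℝ) (ha : ∀ i, a i = 0 ∨ a i = 2)
    (ht : ∀ i, |t i| ≤ 1) {ε : ℝ} (hε : 0 ≤ ε)
    (hst : ∀ i, ∀ j ∈ univ.erase i, |s i j - t j| ≤ ε) :
    (∑ i, a i * (t i + 1) ^ 2) / (8 * (Fintype.card ι : ℝ) ^ 2)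
        + (∑ i, ∑ j ∈ univ.erase i, a i * a j * |t i + 1| * |s i j - t j|)
          / (8 * (Fintype.card ι : ℝ) ^ 2)
      ≤ 1 / Fintype.card ι + ε := by
  set N : ℝ := (Fintype.card ι : ℝ)
  have ha' : ∀ i, 0 ≤ a i ∧ a i ≤ 2 := fun i => by rcases ha i with h | h <;> norm_num [h]
  have ht' : ∀ i, 0 ≤ t i + 1 ∧ t i + 1 ≤ 2 := fun i => by
    constructor <;> linarith [abs_le.mp (ht i)]
  have hdiag : ∑ i, a i * (t i + 1) ^ 2 ≤ 8 * N := by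
    refine (sum_le_sum fun i _ => (?_ : a i * (t i + 1) ^ 2 ≤ 8)).trans_eq (by simp [N, mul_comm])
    nlinarith [ha' i, ht' i, mul_le_mul (ht' i).2 (ht' i).2 (ht' i).1 zero_le_two]
  have hoff : ∑ i, ∑ j ∈ univ.erase i, a i * a j * |t i + 1| * |s i j - t j| ≤ 8 * ε * N ^ 2 := by
    have hterm : ∀ i, ∀ j ∈ univ.erase i, a i * a j * |t i + 1| * |s i j - t j| ≤ 8 * ε := by
      intro i j hj
      rw [abs_of_nonneg (ht' i).1]
      have hprod : a i * a j * (t i + 1) ≤ 8 := by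
        nlinarith [ha' i, ha' j, ht' i, mul_le_mul (ha' i).2 (ha' j).2 (ha' j).1 zero_le_two]
      have := hst i j hj
      nlinarith [mul_nonneg (mul_nonneg (ha' i).1 (ha' j).1) (ht' i).1, abs_nonneg (s i j - t j)]
    calc _ ≤ ∑ _i : ι, ∑ _j : ι, 8 * ε := sum_le_sum fun i _ =>
          (sum_le_sum (hterm i)).trans
            (sum_le_sum_of_subset_of_nonneg (erase_subset _ _) fun _ _ _ => by positivity)
      _ = 8 * ε * N ^ 2 := by simp [N]; ring
  have hN : 0 ≤ N := Nat.cast_nonneg _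
  clear_value N
  rcases hN.eq_or_lt with rfl | hN
  · simpa using hε
  · have hN0 : N ≠ 0 := hN.ne'
    calc _ ≤ 8 * N / (8 * N ^ 2) + 8 * ε * N ^ 2 / (8 * N ^ 2) := by gcongr
      _ = 1 / N + ε := by field_simp

end

theorem curieWeiss_Q22_bound_general (β h : ℝ) :
    ∃ C : ℝ, 0 < C ∧ ∀ n : ℕ, 0 < n → ∀ σ : Fin n → ℝ, (∀ i, σ i = 1 ∨ σ i = -1) →
      ∀ mi : Fin n → ℝ, (∀ i, mi i = (∑ j ∈ univ.erase i, σ j) / n) →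
      ∀ mij : Fin n → Fin n → ℝ,
        (∀ i j, mij i j = (∑ k ∈ (univ.erase i).erase j, σ k) / n) →
      ∀ Q2 Q22 : ℝ,
        Q2 = (∑ i, ((1 - σ i) / 2) * ((Real.tanh (β * mi i + h) + 1) / 2)) / n →
        Q22 = (∑ i, ∑ j ∈ univ.erase i,
            (1 - σ i) * (Real.tanh (β * mi i + h) + 1) * (1 - σ j)
              * (Real.tanh (β * mij i j + β / n + h) + 1)) / (16 * n ^ 2) →
      (|Q22 - Q2 ^ 2| ≤
          (∑ i, (1 - σ i) * (Real.tanh (β * mi i + h) + 1) ^ 2) / (8 * n ^ 2)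
          + (∑ i, ∑ j ∈ univ.erase i, (1 - σ i) * (1 - σ j)
              * |Real.tanh (β * mi i + h) + 1|
              * |Real.tanh (β * mij i j + β / n + h) - Real.tanh (β * mi j + h)|)
            / (8 * n ^ 2))
      ∧ (∑ i, (1 - σ i) * (Real.tanh (β * mi i + h) + 1) ^ 2) / (8 * n ^ 2)
          + (∑ i, ∑ j ∈ univ.erase i, (1 - σ i) * (1 - σ j)
              * |Real.tanh (β * mi i + h) + 1|
              * |Real.tanh (β * mij i j + β / n + h) - Real.tanh (β * mi j + h)|)
            / (8 * n ^ 2) ≤ C / n := by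
  refine ⟨1 + 2 * |β|, by positivity, fun n _ σ hσ mi hmi mij hmij Q2 Q22 hQ2 hQ22 => ?_⟩
  have ha : ∀ i, 1 - σ i = 0 ∨ 1 - σ i = 2 := fun i => by rcases hσ i with hi | hi <;> norm_num [hi]
  have hshift : ∀ i, ∀ j ∈ univ.erase i,
      |tanh (β * mij i j + β / n + h) - tanh (β * mi j + h)| ≤ 2 * |β| / n := by
    intro i j hj
    rw [hmij, hmi]
    exact abs_tanh_field_flip_sub_le β h n.cast_nonneg σ (hσ i) (ne_of_mem_erase hj).symm
  subst hQ2 hQ22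
  refine ⟨abs_pairSum_sub_sq_le (fun i => 1 - σ i) (fun i => tanh (β * mi i + h))
    (fun i j => tanh (β * mij i j + β / n + h)) ha n, ?_⟩
  have hbound := pairSum_error_le_inv_card_add (fun i => 1 - σ i) (fun i => tanh (β * mi i + h))
    (fun i j => tanh (β * mij i j + β / n + h)) ha (fun i => (abs_tanh_lt_one _).le)
    (by positivity) hshift
  rw [Fintype.card_fin] at hbound
  exact hbound.trans_eq (by ring)

/-- Lemma 7, second part (Curie–Weiss model, Glauber dynamics): the bound
`|Q_{2,2}(σ) − Q₂(σ)²| ≤ (explicit right-hand side) ≤ C/n`. -/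
theorem curieWeiss_Q22_bound (β h : ℝ) (hβ : 0 < β) :
    ∃ C : ℝ, 0 < C ∧ ∀ n : ℕ, 0 < n → ∀ σ : Fin n → ℝ, (∀ i, σ i = 1 ∨ σ i = -1) →
      ∀ mi : Fin n → ℝ, (∀ i, mi i = (∑ j ∈ univ.erase i, σ j) / n) →
      ∀ mij : Fin n → Fin n → ℝ,
        (∀ i j, mij i j = (∑ k ∈ (univ.erase i).erase j, σ k) / n) →
      ∀ Q2 Q22 : ℝ,
        Q2 = (∑ i, ((1 - σ i) / 2) * ((Real.tanh (β * mi i + h) + 1) / 2)) / n →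
        Q22 = (∑ i, ∑ j ∈ univ.erase i,
            (1 - σ i) * (Real.tanh (β * mi i + h) + 1) * (1 - σ j)
              * (Real.tanh (β * mij i j + β / n + h) + 1)) / (16 * n ^ 2) →
      (|Q22 - Q2 ^ 2| ≤
          (∑ i, (1 - σ i) * (Real.tanh (β * mi i + h) + 1) ^ 2) / (8 * n ^ 2)
          + (∑ i, ∑ j ∈ univ.erase i, (1 - σ i) * (1 - σ j)
              * |Real.tanh (β * mi i + h) + 1|
              * |Real.tanh (β * mij i j + β / n + h) - Real.tanh (β * mi j + h)|)
            / (8 * n ^ 2))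
      ∧ (∑ i, (1 - σ i) * (Real.tanh (β * mi i + h) + 1) ^ 2) / (8 * n ^ 2)
          + (∑ i, ∑ j ∈ univ.erase i, (1 - σ i) * (1 - σ j)
              * |Real.tanh (β * mi i + h) + 1|
              * |Real.tanh (β * mij i j + β / n + h) - Real.tanh (β * mi j + h)|)
            / (8 * n ^ 2) ≤ C / n :=
  curieWeiss_Q22_bound_general β h
end
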